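/- Bound on the kernel-weighted correction term: under the stated assumptions, let y ∈ ℝᴺ and set ã = C_MC⁻¹(y − μ_MC(X)) ∈ ℝᴺ where μ_MC(X) = (μ_MC(x⁽¹⁾), …, μ_MC(x⁽ᴺ⁾))ᵀ. Then ‖L(∑_{i=1}^N ãᵢ·k_MC(·, x⁽ⁱ⁾))‖ ≤ (2ε·√(M/(M−1)) + σ_g)·‖C_MC⁻¹‖₂·‖y − μ_MC(X)‖₂·∑_{i=1}^N σᵢ, where ∑_{i=1}^N ãᵢ·k_MC(·, x⁽ⁱ⁾) denotes the function x ↦ ∑_{i=1}^N ãᵢ·k_MC(x, x⁽ⁱ⁾). -/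

import Mathlib

/-- The Euclidean (ℓ²) norm of a vector in `ℝᴺ`. -/
noncomputable def euclNorm {N : ℕ} (v : Fin N → ℝ) : ℝ :=
  ‖(EuclideanSpace.equiv (Fin N) ℝ).symm v‖

/-- The operator (spectral) norm of an `N×N` real matrix with respect to the
Euclidean norm. -/
noncomputable def matOpNorm {N : ℕ} (A : Matrix (Fin N) (Fin N) ℝ) : ℝ :=
  ‖Matrix.toEuclideanCLM (𝕜 := ℝ) A‖

lemma euclNorm_mulVec_le {N : ℕ} (A : Matrix (Fin N) (Fin N) ℝ) (v : Fin N → ℝ) :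
    euclNorm (A.mulVec v) ≤ matOpNorm A * euclNorm v := by
  show ‖(WithLp.equiv 2 (Fin N → ℝ)).symm (A.mulVec v)‖ ≤ _
  have := (Matrix.toEuclideanCLM (𝕜 := ℝ) A).le_opNorm ((WithLp.equiv 2 (Fin N → ℝ)).symm v)
  exact this

lemma abs_le_euclNorm {N : ℕ} (v : Fin N → ℝ) (i : Fin N) : |v i| ≤ euclNorm v := by
  show |v i| ≤ ‖(WithLp.equiv 2 (Fin N → ℝ)).symm v‖
  rw [EuclideanSpace.norm_eq]
  calc |v i| = Real.sqrt (|v i| ^ 2) := by rw [Real.sqrt_sq (abs_nonneg _)]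
  _ ≤ _ := by
      apply Real.sqrt_le_sqrt
      exact Finset.single_le_sum (f := fun j => ‖(WithLp.equiv 2 (Fin N → ℝ)).symm v j‖ ^ 2)
        (fun j _ => by positivity) (Finset.mem_univ i)

lemma cs_sum {M : ℕ} (f h : Fin M → ℝ) (hh : ∀ m, 0 ≤ h m) :
    ∑ m, |f m| * h m ≤ Real.sqrt (∑ m, f m ^ 2) * Real.sqrt (∑ m, h m ^ 2) := by
  have h1 : (∑ m, |f m| * h m) ^ 2 ≤ (∑ m, |f m| ^ 2) * (∑ m, h m ^ 2) :=
    Finset.sum_mul_sq_le_sq_mul_sq _ _ _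
  have h0 : 0 ≤ ∑ m, |f m| * h m :=
    Finset.sum_nonneg fun m _ => mul_nonneg (abs_nonneg _) (hh m)
  calc ∑ m, |f m| * h m = Real.sqrt ((∑ m, |f m| * h m) ^ 2) := (Real.sqrt_sq h0).symm
  _ ≤ Real.sqrt ((∑ m, |f m| ^ 2) * (∑ m, h m ^ 2)) := Real.sqrt_le_sqrt h1
  _ = _ := by
      rw [Real.sqrt_mul (Finset.sum_nonneg fun m _ => by positivity)]
      congr 1
      simp [sq_abs]

/-- Bound on the kernel-weighted correction term:
`‖L(∑ᵢ ãᵢ·k_MC(·, x⁽ⁱ⁾))‖ ≤ (2ε·√(M/(M−1)) + σ_g)·‖C_MC⁻¹‖₂·‖y − μ_MC(X)‖₂·∑ᵢ σᵢ`. -/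
theorem kernel_correction_bound
    {D : Type*} [Nonempty D] {N M : ℕ} (hM : 2 ≤ M)
    (x : Fin N → D) (Y : Fin M → D → ℝ)
    {F : Type*} [NormedAddCommGroup F] [NormedSpace ℝ F]
    (L : (D → ℝ) →ₗ[ℝ] F) (ε : ℝ) (hε : 0 ≤ ε) (g : Fin M → F)
    (hg : ∀ m, ‖L (Y m) - g m‖ ≤ ε)
    (μMC : D → ℝ) (hμ : ∀ z, μMC z = (1 / (M : ℝ)) * ∑ m, Y m z)
    (kMC : D → D → ℝ)
    (hk : ∀ z z', kMC z z' =
      (1 / ((M : ℝ) - 1)) * ∑ m, (Y m z - μMC z) * (Y m z' - μMC z'))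
    (gbar : F) (hgbar : gbar = (1 / (M : ℝ)) • ∑ m, g m)
    (σg : ℝ) (hσg : σg = Real.sqrt ((1 / ((M : ℝ) - 1)) * ∑ m, ‖g m - gbar‖ ^ 2))
    (σ : Fin N → ℝ)
    (hσ : ∀ i, σ i = Real.sqrt
      ((1 / ((M : ℝ) - 1)) * ∑ m, (Y m (x i) - μMC (x i)) ^ 2))
    (CMC : Matrix (Fin N) (Fin N) ℝ)
    (hC : ∀ i j, CMC i j = kMC (x i) (x j)) (hCunit : IsUnit CMC)
    (y : Fin N → ℝ) (ta : Fin N → ℝ)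
    (hta : ta = CMC⁻¹.mulVec (y - fun i => μMC (x i))) :
    ‖L (fun z => ∑ i, ta i * kMC z (x i))‖ ≤
      (2 * ε * Real.sqrt ((M : ℝ) / ((M : ℝ) - 1)) + σg) *
        matOpNorm CMC⁻¹ * euclNorm (y - fun i => μMC (x i)) * ∑ i, σ i := by
  have hM2 : (2:ℝ) ≤ (M:ℝ) := by exact_mod_cast hM
  have hMpos : (0:ℝ) < (M:ℝ) - 1 := by linarith
  have hM0 : (0:ℝ) < (M:ℝ) := by linarith
  set c : ℝ := 1 / ((M:ℝ) - 1) with hc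
  have hcpos : 0 < c := by positivity
  set f : Fin M → D → ℝ := fun m => Y m - μMC with hf
  have hfz : ∀ m z, f m z = Y m z - μMC z := fun m z => rfl
  -- rewrite the argument of L
  have harg : (fun z => ∑ i, ta i * kMC z (x i)) =
      ∑ i, ∑ m, (ta i * c * f m (x i)) • f m := by
    funext z
    simp only [Finset.sum_apply, Pi.smul_apply, smul_eq_mul]
    refine Finset.sum_congr rfl fun i _ => ?_
    rw [hk z (x i), Finset.mul_sum, Finset.mul_sum]
    exact Finset.sum_congr rfl fun m _ => by rw [hfz, hfz]; ring
  -- norms of L (f m)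
  have hLμ : L μMC = (1/(M:ℝ)) • ∑ m, L (Y m) := by
    have hμ' : μMC = (1/(M:ℝ)) • ∑ m, Y m := by
      funext z; simp [hμ z, Finset.sum_apply]
    rw [hμ', map_smul, map_sum]
  have hμg : ‖L μMC - gbar‖ ≤ ε := by
    rw [hLμ, hgbar, ← smul_sub, ← Finset.sum_sub_distrib, norm_smul]
    have hb : ‖∑ m, (L (Y m) - g m)‖ ≤ (M:ℝ) * ε := by
      refine (norm_sum_le _ _).trans ?_
      calc ∑ m, ‖L (Y m) - g m‖ ≤ ∑ _m : Fin M, ε := Finset.sum_le_sum fun m _ => hg m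
      _ = (M:ℝ) * ε := by simp [mul_comm]
    have h1 : ‖(1/(M:ℝ))‖ = 1/(M:ℝ) := by
      rw [Real.norm_eq_abs, abs_of_pos (by positivity)]
    rw [h1]
    calc (1/(M:ℝ)) * ‖∑ m, (L (Y m) - g m)‖ ≤ (1/(M:ℝ)) * ((M:ℝ) * ε) :=
          mul_le_mul_of_nonneg_left hb (by positivity)
    _ = ε := by field_simp
  have hLfb : ∀ m, ‖L (f m)‖ ≤ ‖g m - gbar‖ + 2 * ε := by
    intro m
    have h1 : L (f m) = (g m - gbar) + ((L (Y m) - g m) - (L μMC - gbar)) := by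
      have : f m = Y m - μMC := rfl
      rw [this, map_sub]; abel
    rw [h1]
    calc ‖(g m - gbar) + ((L (Y m) - g m) - (L μMC - gbar))‖
        ≤ ‖g m - gbar‖ + ‖(L (Y m) - g m) - (L μMC - gbar)‖ := norm_add_le _ _
    _ ≤ ‖g m - gbar‖ + (‖L (Y m) - g m‖ + ‖L μMC - gbar‖) := by
        gcongr; exact norm_sub_le _ _
    _ ≤ ‖g m - gbar‖ + (ε + ε) := by
        have h2 := hg m
        gcongr
    _ = ‖g m - gbar‖ + 2 * ε := by ring
  -- bound on √c * S
  set S : ℝ := Real.sqrt (∑ m, ‖L (f m)‖ ^ 2) with hS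
  set K : ℝ := 2 * ε * Real.sqrt ((M : ℝ) / ((M : ℝ) - 1)) + σg with hK
  have hScS : Real.sqrt c * S ≤ K := by
    -- Minkowski
    set u : EuclideanSpace ℝ (Fin M) := (WithLp.equiv 2 (Fin M → ℝ)).symm (fun m => ‖g m - gbar‖)
    set v : EuclideanSpace ℝ (Fin M) := (WithLp.equiv 2 (Fin M → ℝ)).symm (fun _ => 2 * ε)
    have hun : ‖u‖ = Real.sqrt (∑ m, ‖g m - gbar‖ ^ 2) := by
      rw [EuclideanSpace.norm_eq]
      congr 1
      exact Finset.sum_congr rfl fun m _ => by simp [u]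
    have hvn : ‖v‖ = Real.sqrt (M:ℝ) * (2 * ε) := by
      rw [EuclideanSpace.norm_eq]
      have h2 : ∀ m : Fin M, ‖v m‖ ^ 2 = (2*ε)^2 := fun m => by
        simp [v, sq_abs, abs_of_nonneg hε]
      have : ∑ m : Fin M, ‖v m‖ ^ 2 = (M:ℝ) * (2*ε)^2 := by
        rw [Finset.sum_congr rfl fun m _ => h2 m, Finset.sum_const, Finset.card_univ,
          Fintype.card_fin, nsmul_eq_mul]
      rw [this, Real.sqrt_mul (le_of_lt hM0), Real.sqrt_sq (by positivity)]
    have huv : ‖u + v‖ = Real.sqrt (∑ m, (‖g m - gbar‖ + 2 * ε) ^ 2) := by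
      rw [EuclideanSpace.norm_eq]
      congr 1
      refine Finset.sum_congr rfl fun m _ => ?_
      have : (u + v) m = ‖g m - gbar‖ + 2 * ε := by simp [u, v]
      rw [this, Real.norm_eq_abs, sq_abs]
    have hSle : S ≤ Real.sqrt (∑ m, (‖g m - gbar‖ + 2 * ε) ^ 2) := by
      apply Real.sqrt_le_sqrt
      refine Finset.sum_le_sum fun m _ => ?_
      have := hLfb m
      have h0 : (0:ℝ) ≤ ‖L (f m)‖ := norm_nonneg _
      nlinarith
    have htri : Real.sqrt (∑ m, (‖g m - gbar‖ + 2 * ε) ^ 2)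
        ≤ Real.sqrt (∑ m, ‖g m - gbar‖ ^ 2) + Real.sqrt (M:ℝ) * (2 * ε) := by
      rw [← hun, ← hvn, ← huv]; exact norm_add_le u v
    have hcsqp : (0:ℝ) ≤ Real.sqrt c := Real.sqrt_nonneg c
    calc Real.sqrt c * S ≤ Real.sqrt c *
        (Real.sqrt (∑ m, ‖g m - gbar‖ ^ 2) + Real.sqrt (M:ℝ) * (2 * ε)) := by
          refine mul_le_mul_of_nonneg_left (hSle.trans htri) hcsqp
    _ = Real.sqrt (c * ∑ m, ‖g m - gbar‖ ^ 2)
          + Real.sqrt (c * (M:ℝ)) * (2 * ε) := by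
        rw [mul_add, ← Real.sqrt_mul (le_of_lt hcpos), ← mul_assoc,
          ← Real.sqrt_mul (le_of_lt hcpos)]
    _ = K := by
        rw [hK, hσg, hc]
        have : 1 / ((M:ℝ) - 1) * (M:ℝ) = (M:ℝ) / ((M:ℝ) - 1) := by ring
        rw [this]; ring
  -- per-i bound
  have hσnn : ∀ i, 0 ≤ σ i := fun i => by rw [hσ i]; exact Real.sqrt_nonneg _
  have hKnn : 0 ≤ K := le_trans (by positivity) hScS
  have hperi : ∀ i, c * ∑ m, |f m (x i)| * ‖L (f m)‖ ≤ σ i * K := by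
    intro i
    have hcs := cs_sum (fun m => f m (x i)) (fun m => ‖L (f m)‖) (fun m => norm_nonneg _)
    have hσi : σ i = Real.sqrt c * Real.sqrt (∑ m, f m (x i) ^ 2) := by
      rw [hσ i, ← Real.sqrt_mul (le_of_lt hcpos)]
      congr 2
    calc c * ∑ m, |f m (x i)| * ‖L (f m)‖
        ≤ c * (Real.sqrt (∑ m, f m (x i) ^ 2) * S) :=
          mul_le_mul_of_nonneg_left hcs (le_of_lt hcpos)
    _ = (Real.sqrt c * Real.sqrt (∑ m, f m (x i) ^ 2)) * (Real.sqrt c * S) :=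
        (by rw [mul_mul_mul_comm, Real.mul_self_sqrt (le_of_lt hcpos)] :
          (Real.sqrt c * Real.sqrt (∑ m, f m (x i) ^ 2)) * (Real.sqrt c * S)
            = c * (Real.sqrt (∑ m, f m (x i) ^ 2) * S)).symm
    _ ≤ (Real.sqrt c * Real.sqrt (∑ m, f m (x i) ^ 2)) * K := by
        refine mul_le_mul_of_nonneg_left hScS (by positivity)
    _ = σ i * K := by rw [hσi]
  -- bound on |ta i|
  set T : ℝ := matOpNorm CMC⁻¹ * euclNorm (y - fun i => μMC (x i)) with hT
  have hTnn : 0 ≤ T := by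
    have h1 : (0:ℝ) ≤ matOpNorm CMC⁻¹ := norm_nonneg _
    have h2 : (0:ℝ) ≤ euclNorm (y - fun i => μMC (x i)) := norm_nonneg _
    exact mul_nonneg h1 h2
  have hta_bound : ∀ i, |ta i| ≤ T := by
    intro i
    calc |ta i| ≤ euclNorm ta := abs_le_euclNorm ta i
    _ ≤ T := by rw [hta]; exact euclNorm_mulVec_le _ _
  -- main chain
  rw [harg, map_sum]
  calc ‖∑ i, L (∑ m, (ta i * c * f m (x i)) • f m)‖
      ≤ ∑ i, ‖L (∑ m, (ta i * c * f m (x i)) • f m)‖ := norm_sum_le _ _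
  _ ≤ ∑ i, |ta i| * (c * ∑ m, |f m (x i)| * ‖L (f m)‖) := by
      refine Finset.sum_le_sum fun i _ => ?_
      rw [map_sum]
      refine (norm_sum_le _ _).trans ?_
      rw [Finset.mul_sum, Finset.mul_sum]
      refine Finset.sum_le_sum fun m _ => ?_
      rw [map_smul, norm_smul, Real.norm_eq_abs, abs_mul, abs_mul,
        abs_of_pos hcpos]
      exact le_of_eq (by ring)
  _ ≤ ∑ i, T * (σ i * K) := by
      refine Finset.sum_le_sum fun i _ => ?_
      refine mul_le_mul (hta_bound i) (hperi i) ?_ hTnn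
      refine mul_nonneg (le_of_lt hcpos) ?_
      exact Finset.sum_nonneg fun m _ => mul_nonneg (abs_nonneg _) (norm_nonneg _)
  _ = K * T * ∑ i, σ i := by rw [Finset.mul_sum]; exact Finset.sum_congr rfl fun i _ => by ring
  _ = (2 * ε * Real.sqrt ((M : ℝ) / ((M : ℝ) - 1)) + σg) *
        matOpNorm CMC⁻¹ * euclNorm (y - fun i => μMC (x i)) * ∑ i, σ i := by
      rw [hK, hT]; ring
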